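/- Define T₀(x,y) = ( (5/6)·(3+2x+2y)/(2+x+y) + (5/2)·(x−y)/(3+2x−2y), (5/6)·(3+2x+2y)/(2+x+y) − (5/2)·(x−y)/(3+2x−2y) ) and T₁(x,y) = ( (5/3)(x − y²/(2x)), 5y²/(6x) ). If x ≥ 2, 0 ≤ y ≤ 1, and x + y ≥ 3, then T₀(x,y) and T₁(x,y) also satisfy these three constraints (first coordinate ≥ 2, second coordinate in [0,1], sum ≥ 3). -/

import Mathlib

/-!
Write `s = x + y` and `d = x - y`. Then `T₀ = (a s + b d, a s - b d)` with `a s = (5/6)(3+2s)/(2+s)`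
increasing in `s` and `b d = (5/2) d/(3+2d)` increasing in `d`, so on the region `a s ≥ a 3 = 3/2`
and `b d ≥ b 1 = 1/2`. The only delicate bound is `a s - b d ≤ 1`: it is tight at the fixed point
`(2, 1)` of `T₀` and needs the coupling `s ≤ d + 2` coming from `y ≤ 1`. For `T₁` the two coordinates add up to `5x/3`, and `y²/(2x) ≤ 1/4`.
-/

def lowerRegion : Set (ℝ × ℝ) := {p | 2 ≤ p.1 ∧ 0 ≤ p.2 ∧ p.2 ≤ 1 ∧ 3 ≤ p.1 + p.2}

noncomputable def renewalMap₀ (x y : ℝ) : ℝ × ℝ :=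
  ((5/6) * (3 + 2*x + 2*y) / (2 + x + y) + (5/2) * (x - y) / (3 + 2*x - 2*y),
   (5/6) * (3 + 2*x + 2*y) / (2 + x + y) - (5/2) * (x - y) / (3 + 2*x - 2*y))

noncomputable def renewalMap₁ (x y : ℝ) : ℝ × ℝ := ((5/3) * (x - y^2 / (2*x)), 5 * y^2 / (6*x))

noncomputable def renewalSumTerm (s : ℝ) : ℝ := (5/6) * (3 + 2*s) / (2 + s)

noncomputable def renewalDiffTerm (d : ℝ) : ℝ := (5/2) * d / (3 + 2*d)

theorem renewalMap₀_eq (x y : ℝ) :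
    renewalMap₀ x y = (renewalSumTerm (x + y) + renewalDiffTerm (x - y),
      renewalSumTerm (x + y) - renewalDiffTerm (x - y)) := by
  simp only [renewalMap₀, renewalSumTerm, renewalDiffTerm]
  ring_nf

theorem three_halves_le_renewalSumTerm {s : ℝ} (hs : 3 ≤ s) : 3/2 ≤ renewalSumTerm s := by
  rw [renewalSumTerm, le_div_iff₀ (by linarith)]
  linarith

theorem half_le_renewalDiffTerm {d : ℝ} (hd : 1 ≤ d) : 1/2 ≤ renewalDiffTerm d := by
  rw [renewalDiffTerm, le_div_iff₀ (by linarith)]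
  linarith

theorem renewalDiffTerm_le {d : ℝ} (hd : 0 < 3 + 2*d) : renewalDiffTerm d ≤ 5/4 := by
  rw [renewalDiffTerm, div_le_iff₀ hd]
  linarith

theorem renewalSumTerm_sub_renewalDiffTerm_le_one {s d : ℝ} (hs : 0 < 2 + s) (hd : 1 ≤ d)
    (hsd : s ≤ d + 2) : renewalSumTerm s - renewalDiffTerm d ≤ 1 := by
  have hd' : 0 < 3 + 2*d := by linarith
  rw [renewalSumTerm, renewalDiffTerm, div_sub_div _ _ hs.ne' hd'.ne', div_le_one (by positivity)]
  nlinarith [mul_nonneg (sub_nonneg.2 hd) (sub_nonneg.2 hsd)]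

theorem renewalMap₀_mem_lowerRegion {x y : ℝ} (h : (x, y) ∈ lowerRegion) :
    renewalMap₀ x y ∈ lowerRegion := by
  obtain ⟨hx, -, hy1, hsum⟩ := h
  have ha := three_halves_le_renewalSumTerm hsum
  have hb := half_le_renewalDiffTerm (d := x - y) (by linarith)
  have hb' := renewalDiffTerm_le (d := x - y) (by linarith)
  have hab := renewalSumTerm_sub_renewalDiffTerm_le_one (s := x + y) (d := x - y)
    (by linarith) (by linarith) (by linarith)
  rw [renewalMap₀_eq]
  exact ⟨by linarith, by linarith, hab, by linarith⟩

theorem renewalMap₁_fst_add_snd {x : ℝ} (hx : x ≠ 0) (y : ℝ) :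
    (renewalMap₁ x y).1 + (renewalMap₁ x y).2 = 5/3 * x := by
  simp only [renewalMap₁]
  field_simp
  ring

theorem renewalMap₁_mem_lowerRegion {x y : ℝ} (h : (x, y) ∈ lowerRegion) :
    renewalMap₁ x y ∈ lowerRegion := by
  obtain ⟨hx, hy0, hy1, -⟩ := h
  have hx0 : 0 < x := by linarith
  have hy2 : y^2 ≤ 1 := by nlinarith
  have hcorr : y^2 / (2*x) ≤ 1/4 := by
    rw [div_le_iff₀ (by positivity)]
    linarith
  have hsnd : 5 * y^2 / (6*x) ≤ 1 := by
    rw [div_le_iff₀ (by positivity)]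
    linarith
  have hsum := renewalMap₁_fst_add_snd hx0.ne' y
  refine ⟨?_, by simp only [renewalMap₁]; positivity, hsnd, by linarith⟩
  simp only [renewalMap₁]
  linarith

/-- The region {(x,y) : x ≥ 2, 0 ≤ y ≤ 1, x+y ≥ 3} is invariant under both
renewal maps T₀ and T₁ for the normal-derivative coefficients (η₁,η₂) of the
lower domain of SG. -/
theorem renewal_maps_invariant_region (x y : ℝ)
    (hx : 2 ≤ x) (hy0 : 0 ≤ y) (hy1 : y ≤ 1) (hsum : 3 ≤ x + y) :
    let T₀ : ℝ × ℝ := ((5/6) * (3 + 2*x + 2*y) / (2 + x + y) + (5/2) * (x - y) / (3 + 2*x - 2*y),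
                       (5/6) * (3 + 2*x + 2*y) / (2 + x + y) - (5/2) * (x - y) / (3 + 2*x - 2*y))
    let T₁ : ℝ × ℝ := ((5/3) * (x - y^2 / (2*x)), 5 * y^2 / (6*x))
    (2 ≤ T₀.1 ∧ 0 ≤ T₀.2 ∧ T₀.2 ≤ 1 ∧ 3 ≤ T₀.1 + T₀.2) ∧
    (2 ≤ T₁.1 ∧ 0 ≤ T₁.2 ∧ T₁.2 ≤ 1 ∧ 3 ≤ T₁.1 + T₁.2) := by
  have h : (x, y) ∈ lowerRegion := ⟨hx, hy0, hy1, hsum⟩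
  exact ⟨renewalMap₀_mem_lowerRegion h, renewalMap₁_mem_lowerRegion h⟩
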